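/- Classical case of the main theorem: a bounded linear operator T on ℓ²(ℤ) has a Toeplitz matrix — i.e. ⟨T e_j, e_i⟩ = ⟨T e_{j−1}, e_{i−1}⟩ for all i, j ∈ ℤ — if and only if T lies in the σ-closure of the set of convolution operators by finitely supported sequences, i.e. if and only if for every ε > 0 and every finite set F ⊆ ℤ there exists a finitely supported function f : ℤ → ℂ such that ‖T e_j − Λ_f e_j‖ < ε for all j ∈ F. -/

import Mathlib

open scoped ComplexConjugate ENNReal

noncomputable section

/-- The Hilbert space `ℓ²(ℤ)` of square-summable complex sequences indexed by `ℤ`. -/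
abbrev H2 : Type := lp (fun _ : ℤ => ℂ) 2

/-- The standard orthonormal basis vector `e j` of `ℓ²(ℤ)`. -/
def e (j : ℤ) : H2 := lp.single 2 j 1

/-- `IsConv f L` says that `L` is the convolution operator `Λ_f` on `ℓ²(ℤ)`,
i.e. `(L x)(l) = ∑_{k ∈ ℤ} f (l - k) * x k`. -/
def IsConv (f : ℤ → ℂ) (L : H2 →L[ℂ] H2) : Prop :=
  ∀ (x : H2) (l : ℤ), L x l = ∑ᶠ k : ℤ, f (l - k) * x k

/-- A bounded operator on `ℓ²(ℤ)` is Toeplitz if `⟨T e_j, e_i⟩ = ⟨T e_{j-1}, e_{i-1}⟩`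
for all `i, j ∈ ℤ`. -/
def IsToeplitz (T : H2 →L[ℂ] H2) : Prop :=
  ∀ i j : ℤ, (inner ℂ (e i) (T (e j)) : ℂ) = inner ℂ (e (i - 1)) (T (e (j - 1)))

/-!
A Toeplitz operator satisfies `T e_j = S^j (T e_0)` for the bilateral shift `S`. Truncating
`T e_0` to a finitely supported `w` with `‖T e_0 - w‖ < ε` gives the convolution `Λ_w`, with
`Λ_w e_j = S^j w`; as `S` is an isometry, `‖T e_j - Λ_w e_j‖ = ‖T e_0 - w‖ < ε` for every `j`.
Conversely, convolution operators have constant diagonals and each matrix entry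
`T ↦ (T e_j) i` is continuous for the σ topology, so σ-limits of them are Toeplitz.
-/

lemma lp.exists_finite_support_norm_sub_lt {α E : Type*} [NormedAddCommGroup E]
    {p : ℝ≥0∞} [Fact (1 ≤ p)] (hp : p ≠ ⊤) (v : lp (fun _ : α => E) p) {ε : ℝ} (hε : 0 < ε) :
    ∃ w : lp (fun _ : α => E) p, (Function.support ⇑w).Finite ∧ ‖v - w‖ < ε := by
  classical
  obtain ⟨S, hS⟩ := (Metric.tendsto_nhds.mp (lp.hasSum_single hp v) ε hε).exists
  refine ⟨∑ i ∈ S, lp.single p i (v i), S.finite_toSet.subset fun l hl => ?_, ?_⟩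
  · by_contra hlS
    rw [Function.mem_support, lp.coeFn_sum, Finset.sum_apply] at hl
    exact hl (Finset.sum_eq_zero fun i hi =>
      lp.single_apply_ne p i _ (ne_of_mem_of_not_mem hi hlS).symm)
  · rwa [dist_comm, dist_eq_norm] at hS

lemma memℓp_comp_sub (n : ℤ) (x : H2) : Memℓp (fun l => x (l - n)) 2 := by
  have hx := lp.memℓp x
  rw [memℓp_gen_iff (by norm_num)] at hx ⊢
  exact (Equiv.subRight n).summable_iff.2 hx

def shift (n : ℤ) : H2 →ₗᵢ[ℂ] H2 where
  toFun x := ⟨fun l => x (l - n), memℓp_comp_sub n x⟩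
  map_add' _ _ := rfl
  map_smul' _ _ := rfl
  norm_map' x := by
    simp only [lp.norm_eq_tsum_rpow (p := 2) (by norm_num)]
    congr 1
    exact (Equiv.subRight n).tsum_eq (fun m => ‖x m‖ ^ (2 : ℝ≥0∞).toReal)

@[simp] lemma shift_apply (n : ℤ) (x : H2) (l : ℤ) : shift n x l = x (l - n) := rfl

lemma e_apply (j i : ℤ) : e j i = if i = j then 1 else 0 := by
  simp [e, lp.single_apply, Pi.single_apply]

lemma inner_e_left (i : ℤ) (y : H2) : inner ℂ (e i) y = y i := by
  simp [e, lp.inner_single_left]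

lemma isToeplitz_iff (T : H2 →L[ℂ] H2) :
    IsToeplitz T ↔ ∀ i j, T (e j) i = T (e (j - 1)) (i - 1) := by
  simp only [IsToeplitz, inner_e_left]

lemma IsToeplitz.apply_e {T : H2 →L[ℂ] H2} (hT : IsToeplitz T) (j i : ℤ) :
    T (e j) i = T (e 0) (i - j) := by
  rw [isToeplitz_iff] at hT
  induction j using Int.induction_on generalizing i with
  | zero => rw [sub_zero]
  | succ k ih => rw [hT, add_sub_cancel_right, ih]; exact congrArg (T (e 0)) (by ring)
  | pred k ih =>
    have h := hT (i + 1) (-k)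
    rw [add_sub_cancel_right, ih] at h
    rw [← h]; exact congrArg (T (e 0)) (by ring)

lemma IsConv.apply_e {f : ℤ → ℂ} {L : H2 →L[ℂ] H2} (hL : IsConv f L) (j i : ℤ) :
    L (e j) i = f (i - j) := by
  rw [hL, finsum_eq_single _ j fun k hk => by rw [e_apply, if_neg hk, mul_zero], e_apply,
    if_pos rfl, mul_one]

lemma isConv_sum_smul_shift (f : ℤ → ℂ) {S : Finset ℤ} (hS : Function.support f ⊆ S) :
    IsConv f (∑ n ∈ S, f n • (shift n).toContinuousLinearMap) := by
  intro x l
  have hsupp : Function.support (fun k => f (l - k) * x k) ⊆ ↑(S.image (l - ·)) := by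
    intro k hk
    exact Finset.mem_image.2 ⟨l - k, hS (left_ne_zero_of_mul hk), sub_sub_cancel l k⟩
  rw [finsum_eq_finsetSum_of_support_subset _ hsupp,
    Finset.sum_image fun a _ b _ h => sub_right_injective h, sum_apply, lp.coeFn_sum, Finset.sum_apply]
  simp [lp.coeFn_smul]

lemma exists_isConv {f : ℤ → ℂ} (hf : (Function.support f).Finite) :
    ∃ L : H2 →L[ℂ] H2, IsConv f L :=
  ⟨_, isConv_sum_smul_shift f hf.coe_toFinset.symm.subset⟩

/-- `L` has constant diagonals, so the Toeplitz defect of `T` is that of `T - L`. -/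
lemma norm_apply_e_sub_apply_e_le {f : ℤ → ℂ} {L : H2 →L[ℂ] H2} (hL : IsConv f L)
    (T : H2 →L[ℂ] H2) (i j : ℤ) :
    ‖T (e j) i - T (e (j - 1)) (i - 1)‖ ≤
      ‖T (e j) - L (e j)‖ + ‖T (e (j - 1)) - L (e (j - 1))‖ := by
  have hL' : L (e j) i = L (e (j - 1)) (i - 1) := by
    rw [hL.apply_e, hL.apply_e, sub_sub_sub_cancel_right]
  calc ‖T (e j) i - T (e (j - 1)) (i - 1)‖
      = ‖(T (e j) - L (e j)) i - (T (e (j - 1)) - L (e (j - 1))) (i - 1)‖ := by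
        rw [lp.coeFn_sub, lp.coeFn_sub, Pi.sub_apply, Pi.sub_apply, hL']; congr 1; ring
    _ ≤ ‖(T (e j) - L (e j)) i‖ + ‖(T (e (j - 1)) - L (e (j - 1))) (i - 1)‖ := norm_sub_le _ _
    _ ≤ _ := add_le_add (lp.norm_apply_le_norm (by norm_num) _ _)
        (lp.norm_apply_le_norm (by norm_num) _ _)

/-- Classical case of the main theorem: a bounded operator `T` on `ℓ²(ℤ)` has a
Toeplitz matrix if and only if it lies in the σ-closure of the set of convolution
operators by finitely supported sequences. -/
theorem stmt6 (T : H2 →L[ℂ] H2) :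
    IsToeplitz T ↔
      ∀ ε > (0 : ℝ), ∀ F : Finset ℤ, ∃ f : ℤ → ℂ, (Function.support f).Finite ∧
        ∃ L : H2 →L[ℂ] H2, IsConv f L ∧ ∀ j ∈ F, ‖T (e j) - L (e j)‖ < ε := by
  constructor
  · intro hT ε hε F
    obtain ⟨w, hw, hvw⟩ := lp.exists_finite_support_norm_sub_lt (by simp) (T (e 0)) hε
    obtain ⟨L, hL⟩ := exists_isConv hw
    refine ⟨w, hw, L, hL, fun j _ => ?_⟩
    have hshift : T (e j) - L (e j) = shift j (T (e 0) - w) := by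
      ext l
      rw [lp.coeFn_sub, Pi.sub_apply, hT.apply_e, hL.apply_e, shift_apply, lp.coeFn_sub,
        Pi.sub_apply]
    rwa [hshift, LinearIsometry.norm_map]
  · intro h
    refine (isToeplitz_iff T).2 fun i j => eq_of_forall_dist_le fun ε hε => ?_
    obtain ⟨f, -, L, hL, hclose⟩ := h (ε / 2) (half_pos hε) {j, j - 1}
    have h₁ := hclose j (by simp)
    have h₂ := hclose (j - 1) (by simp)
    rw [dist_eq_norm]
    linarith [norm_apply_e_sub_apply_e_le hL T i j]
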